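/- Let T be a p-string with unique smallest end-marker $ and let c ∈ Σs be a static symbol, T̂ = cT, k = R_T(1) the rank of ⟨T⟩ among p-encoded suffixes of T. If p is the largest position ≤ k with L_T[p] = c, then the rank k₋ of the lexicographically largest p-encoded suffix of T that is smaller than ⟨T̂⟩ equals LF_T(p); consequently the rank of ⟨T̂⟩ among p-encoded suffixes of T̂ is LF_T(p)+1 adjusted for insertion. -/

import Mathlib

/-- Symbols of a parameterized string: static symbols `s a` (from Σs) and
parameter symbols `p a` (from Σp). -/
inductive PSym where
  | s : ℕ → PSym
  | p : ℕ → PSym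
deriving DecidableEq

/-- Symbols of a p-encoded string: static symbols, finite distances, and ∞. -/
inductive Enc where
  | s : ℕ → Enc
  | fin : ℕ → Enc
  | inf : Enc
deriving DecidableEq

/-- Order embedding: static symbols < natural numbers < ∞. -/
def Enc.toPair : Enc → ℕ ×ₗ ℕ
  | .s a => toLex (0, a)
  | .fin d => toLex (1, d)
  | .inf => toLex (2, 0)

instance : LinearOrder Enc :=
  LinearOrder.lift' Enc.toPair (by
    rintro (a | a | _) (b | b | _) h <;>
      simp_all [Enc.toPair, toLex_inj, Prod.ext_iff])

/-- Largest position `j < i` (0-based) carrying the same symbol as position `i`. -/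
def prevOcc (w : List PSym) (i : ℕ) : Option ℕ :=
  ((List.range i).filter (fun j => w[j]? = w[i]?)).max?

/-- The p-encoding of position `i` (0-based) of `w`. -/
def pencSym (w : List PSym) (i : ℕ) : Enc :=
  match w[i]? with
  | some (PSym.s a) => Enc.s a
  | some (PSym.p _) =>
    match prevOcc w i with
    | some j => Enc.fin (i - j)
    | none => Enc.inf
  | none => Enc.inf

/-- The p-encoding ⟨w⟩ of a p-string `w`. -/
def penc (w : List PSym) : List Enc :=
  (List.range w.length).map (pencSym w)

/-- Lexicographic (strict) order on p-encoded strings. -/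
def lexLt (x y : List Enc) : Prop := List.Lex (· < ·) x y

def lexLe (x y : List Enc) : Prop := lexLt x y ∨ x = y

/-- Length of the longest common prefix. -/
def lcp {α : Type*} [DecidableEq α] : List α → List α → ℕ
  | a :: x, b :: y => if a = b then lcp x y + 1 else 0
  | _, _ => 0

/-- Number of ∞'s in the longest common prefix of two p-encoded strings. -/
def lcpInf (x y : List Enc) : ℕ := (x.take (lcp x y)).count Enc.inf

/-- Number of distinct p-symbols occurring in `w` (denoted |w|_p). -/
def distinctP (w : List PSym) : ℕ :=
  (w.filterMap (fun s => match s with | PSym.p a => some a | PSym.s _ => none)).dedup.length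

/-- For `w` starting with a p-symbol: the rank of `w[1]` among the distinct
p-symbols of `w[1..h+1]`, where `h+1 = min{|w|, second occurrence of w[1] in w}`. -/
def fceRank (w : List PSym) : ℕ :=
  match w with
  | [] => 0
  | c :: rest => distinctP ((c :: rest).take (min (c :: rest).length (2 + rest.idxOf c)))

/-- The function fce from the paper; `fce ε = $` is modelled as `Enc.s 0`. -/
def fce (w : List PSym) : Enc :=
  match w with
  | [] => Enc.s 0
  | PSym.s a :: _ => Enc.s a
  | w => Enc.fin (fceRank w)

/-!
Since `⟨c x⟩ = c ⟨x⟩` for a static symbol `c`, the suffix `T[Rinv p - 1..] = c T[Rinv p..]`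
encodes to `c` followed by the suffix of rank `p < k`, so it lies below `⟨cT⟩ = c ⟨T⟩`. A suffix of
larger rank that is still below `⟨cT⟩` is squeezed between two strings beginning with `c`, so it is
`c` followed by a suffix of some rank `q` with `p < q < k`; then `L q = c`, contradicting the
maximality of `p`. If `p = k`, then `c = $`, and by uniqueness of the end-marker the only suffix
below `$ ⟨T⟩` is `$` itself.
-/

lemma Enc.s_zero_le (e : Enc) : Enc.s 0 ≤ e := by
  change Enc.toPair (Enc.s 0) ≤ Enc.toPair e
  cases e <;> simp [Enc.toPair, Prod.Lex.le_iff]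

namespace List

lemma max?_map_of_monotone {α β : Type*} [LinearOrder α] [LinearOrder β] {f : α → β}
    (hf : Monotone f) (l : List α) : (l.map f).max? = l.max?.map f := by
  induction l with
  | nil => rfl
  | cons a l ih =>
    cases l with
    | nil => rfl
    | cons b l =>
      rw [map_cons, max?_cons, ih, max?_cons, max?_cons]
      simp [Option.elim, hf.map_max]

lemma eq_and_lt_and_lt_of_cons_lt_lt_cons {α : Type*} [LinearOrder α] {a e : α}
    {x y z : List α} (h₁ : a :: y < e :: z) (h₂ : e :: z < a :: x) :
    e = a ∧ y < z ∧ z < x := by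
  obtain rfl : e = a := le_antisymm (head_le_of_lt h₂) (head_le_of_lt h₁)
  exact ⟨rfl, cons_lt_cons_self.mp h₁, cons_lt_cons_self.mp h₂⟩

lemma drop_eq_cons_of_getElem? {α : Type*} {l : List α} {i : ℕ} {x : α} (h : l[i]? = some x) :
    l.drop i = x :: l.drop (i + 1) := by
  obtain ⟨hi, rfl⟩ := getElem?_eq_some_iff.mp h
  exact drop_eq_getElem_cons hi

end List

lemma prevOcc_cons_static (a : ℕ) {w : List PSym} {i x : ℕ} (hx : w[i]? = some (PSym.p x)) :
    prevOcc (PSym.s a :: w) (i + 1) = (prevOcc w i).map (· + 1) := by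
  unfold prevOcc
  rw [← List.max?_map_of_monotone (fun _ _ h => Nat.add_le_add_right h 1), List.range_succ_eq_map,
    List.filter_cons, List.filter_map]
  simp [hx, Function.comp_def]

lemma pencSym_cons_static (a : ℕ) (w : List PSym) (i : ℕ) :
    pencSym (PSym.s a :: w) (i + 1) = pencSym w i := by
  unfold pencSym
  rw [List.getElem?_cons_succ]
  match hx : w[i]? with
  | none => rfl
  | some (PSym.s b) => rfl
  | some (PSym.p x) =>
    rw [prevOcc_cons_static a hx]
    cases prevOcc w i <;> simp

lemma penc_cons_static (a : ℕ) (w : List PSym) : penc (PSym.s a :: w) = Enc.s a :: penc w := by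
  simp only [penc, List.length_cons, List.range_succ_eq_map, List.map_cons, List.map_map]
  exact congrArg₂ _ rfl (List.map_congr_left fun i _ => pencSym_cons_static a w i)

lemma penc_eq_nil_iff {w : List PSym} : penc w = [] ↔ w = [] := by
  simp [penc]

lemma penc_cons_param_head (x : ℕ) (w : List PSym) :
    (penc (PSym.p x :: w)).head? = some Enc.inf := by
  simp [penc, List.range_succ_eq_map, pencSym, prevOcc]

lemma penc_drop_eq_static_cons_iff {T : List PSym} {i a : ℕ} {z : List Enc} :
    penc (T.drop i) = Enc.s a :: z ↔ T[i]? = some (PSym.s a) ∧ z = penc (T.drop (i + 1)) := by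
  refine ⟨fun h => ?_, fun ⟨h, hz⟩ => by rw [List.drop_eq_cons_of_getElem? h, penc_cons_static, hz]⟩
  have hi : i < T.length := by
    by_contra hi
    simp [List.drop_eq_nil_of_le (not_lt.mp hi), penc] at h
  rw [List.drop_eq_getElem_cons hi] at h
  rw [List.getElem?_eq_getElem hi]
  match hc : T[i] with
  | PSym.s b =>
    rw [hc, penc_cons_static] at h
    obtain ⟨hb, rfl⟩ := List.cons.inj h
    exact ⟨by rw [Enc.s.inj hb], rfl⟩
  | PSym.p x =>
    have := penc_cons_param_head x (T.drop (i + 1))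
    rw [← hc, h] at this
    cases this

lemma fce_drop_eq_static_iff {T : List PSym} {i a : ℕ} (hi : i < T.length) :
    fce (T.drop i) = Enc.s a ↔ T[i]? = some (PSym.s a) := by
  rw [List.drop_eq_getElem_cons hi, List.getElem?_eq_getElem hi]
  match T[i] with
  | PSym.s b => simp [fce]
  | PSym.p x => simp [fce]

lemma static_head_of_cons_lt_lt_cons {T : List PSym} {i a : ℕ} {x y : List Enc}
    (h₁ : Enc.s a :: y < penc (T.drop i)) (h₂ : penc (T.drop i) < Enc.s a :: x) :
    T[i]? = some (PSym.s a) ∧ y < penc (T.drop (i + 1)) ∧ penc (T.drop (i + 1)) < x := by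
  obtain ⟨e, z, hz⟩ : ∃ e z, penc (T.drop i) = e :: z :=
    List.exists_cons_of_ne_nil fun h => List.not_lt_nil _ (h ▸ h₁)
  rw [hz] at h₁ h₂
  obtain ⟨rfl, hy, hx⟩ := List.eq_and_lt_and_lt_of_cons_lt_lt_cons h₁ h₂
  obtain ⟨hTi, rfl⟩ := penc_drop_eq_static_cons_iff.mp hz
  exact ⟨hTi, hy, hx⟩

structure IsSuffixRanking (T : List PSym) (Rinv R : ℕ → ℕ) : Prop where
  rinv_lt : ∀ i < T.length, Rinv i < T.length
  strictMonoOn : StrictMonoOn (fun i => penc (T.drop (Rinv i))) (Set.Iio T.length)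
  r_lt : ∀ m < T.length, R m < T.length
  r_rinv : ∀ i < T.length, R (Rinv i) = i
  rinv_r : ∀ m < T.length, Rinv (R m) = m

/-- `r` is the rank `k₋` of the p-pred of `x`. -/
def IsPPredRank (T : List PSym) (Rinv : ℕ → ℕ) (x : List Enc) (r : ℕ) : Prop :=
  lexLt (penc (T.drop (Rinv r))) x ∧ ∀ j < T.length, lexLt (penc (T.drop (Rinv j))) x → j ≤ r

namespace IsSuffixRanking

variable {T : List PSym} {Rinv R : ℕ → ℕ}

lemma rank_lt_iff (hsa : IsSuffixRanking T Rinv R) {i j : ℕ} (hi : i < T.length)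
    (hj : j < T.length) : penc (T.drop (Rinv i)) < penc (T.drop (Rinv j)) ↔ i < j :=
  hsa.strictMonoOn.lt_iff_lt hi hj

theorem isPPredRank_cons_end_marker (hsa : IsSuffixRanking T Rinv R)
    (hend : T.getLast? = some (PSym.s 0))
    (huniq : ∀ i, i + 1 < T.length → T[i]? ≠ some (PSym.s 0)) :
    IsPPredRank T Rinv (Enc.s 0 :: penc T) (R (T.length - 1)) := by
  have hT : T ≠ [] := by rintro rfl; simp at hend
  have hlen := List.length_pos_iff.mpr hT
  have hlast : T.length - 1 < T.length := by omega
  have hget : T[T.length - 1]? = some (PSym.s 0) := List.getLast?_eq_getElem? ▸ hend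
  refine ⟨?_, fun j hj hlt => ?_⟩
  · rw [hsa.rinv_r _ hlast, penc_drop_eq_static_cons_iff.mpr ⟨hget, rfl⟩,
      Nat.sub_add_cancel hlen, List.drop_length]
    obtain ⟨e, z, hz⟩ := List.exists_cons_of_ne_nil (mt penc_eq_nil_iff.mp hT)
    exact List.cons_lt_cons_self.mpr (hz ▸ List.nil_lt_cons e z)
  · have hjT := hsa.rinv_lt j hj
    obtain ⟨e, z, hz⟩ := List.exists_cons_of_ne_nil
      (mt penc_eq_nil_iff.mp (by simpa using hjT : T.drop (Rinv j) ≠ []))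
    obtain rfl : e = Enc.s 0 := le_antisymm (List.head_le_of_lt (hz ▸ hlt)) (Enc.s_zero_le e)
    obtain ⟨hTj, -⟩ := penc_drop_eq_static_cons_iff.mp hz
    have hRj : Rinv j = T.length - 1 := by
      by_contra
      exact huniq _ (by omega) hTj
    rw [← hsa.r_rinv j hj, hRj]

theorem isPPredRank_cons_static (hsa : IsSuffixRanking T Rinv R) {k p m a : ℕ}
    (hk : k < T.length) (hRk : Rinv k = 0) (hpk : p < k)
    (hm : T[m]? = some (PSym.s a)) (hRp : Rinv p = m + 1)
    (hmax : ∀ q < k, ∀ m', Rinv q = m' + 1 → T[m']? = some (PSym.s a) → q ≤ p) :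
    IsPPredRank T Rinv (Enc.s a :: penc T) (R m) := by
  have hp := hpk.trans hk
  have hmT : m < T.length := by have := hsa.rinv_lt p hp; omega
  have hpred : penc (T.drop (Rinv (R m))) = Enc.s a :: penc (T.drop (Rinv p)) := by
    rw [hsa.rinv_r m hmT, hRp]
    exact penc_drop_eq_static_cons_iff.mpr ⟨hm, rfl⟩
  have hpT : penc (T.drop (Rinv p)) < penc T := by
    simpa [hRk] using (hsa.rank_lt_iff hp hk).mpr hpk
  refine ⟨by rw [hpred]; exact List.cons_lt_cons_self.mpr hpT, fun j hj hlt => ?_⟩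
  by_contra! hmj
  have hlt_pred := (hsa.rank_lt_iff (hsa.r_lt m hmT) hj).mpr hmj
  rw [hpred] at hlt_pred
  obtain ⟨hTj, hpq, hqk⟩ := static_head_of_cons_lt_lt_cons hlt_pred hlt
  have hj1 : Rinv j + 1 < T.length := by
    by_contra h
    simp [List.drop_eq_nil_of_le (not_lt.mp h), penc] at hpq
  have hq := hsa.r_lt _ hj1
  have hRq : Rinv (R (Rinv j + 1)) = Rinv j + 1 := hsa.rinv_r _ hj1
  rw [← hRq] at hpq hqk
  have hqp := hmax _ ((hsa.rank_lt_iff hq hk).mp (by simpa [hRk] using hqk)) _ hRq hTj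
  exact absurd ((hsa.rank_lt_iff hp hq).mp hpq) (not_lt.mpr hqp)

end IsSuffixRanking

theorem stmt16 (T : List PSym) (n : ℕ) (hn : n = T.length)
    -- `$` (modelled as `PSym.s 0`, the smallest symbol) is the end-marker of `T`
    (hend : T.getLast? = some (PSym.s 0))
    (huniq : ∀ i, i + 1 < n → T[i]? ≠ some (PSym.s 0))
    -- `Rinv i` is the (0-based) starting position of the lexicographically
    -- (i+1)-st p-encoded suffix of `T`
    (Rinv : ℕ → ℕ) (hdom : ∀ i < n, Rinv i < n)
    (hsorted : ∀ i j, i < j → j < n →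
      lexLt (penc (T.drop (Rinv i))) (penc (T.drop (Rinv j))))
    -- `R` is the rank function, the inverse of `Rinv`
    (R : ℕ → ℕ) (hRdom : ∀ p < n, R p < n)
    (hRinv : ∀ i < n, R (Rinv i) = i) (hR : ∀ p < n, Rinv (R p) = p)
    -- the pBWT array `L`:  L i = fce (T[R⁻¹(i)−1..])  (with T[0..] := $)
    (L : ℕ → Enc)
    (hL : ∀ i < n, L i = fce (if Rinv i = 0 then [PSym.s 0] else T.drop (Rinv i - 1)))
    -- the LF-mapping
    (LF : ℕ → ℕ)
    (hLF : ∀ i < n, LF i = if Rinv i = 0 then R (n - 1) else R (Rinv i - 1))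
    -- prepend a static symbol c = `PSym.s a`; k is the rank of ⟨T⟩
    (a : ℕ) (k : ℕ) (hk : k = R 0)
    -- p is the largest position ≤ k with L p = c
    (p : ℕ) (hp : p ≤ k) (hpc : L p = Enc.s a)
    (hmax : ∀ q ≤ k, L q = Enc.s a → q ≤ p) :
    -- the suffix of rank LF(p) is the p-pred of ⟨cT⟩: the lexicographically
    -- largest p-encoded suffix of T smaller than ⟨cT⟩
    lexLt (penc (T.drop (Rinv (LF p)))) (penc (PSym.s a :: T)) ∧
    (∀ j < n, lexLt (penc (T.drop (Rinv j))) (penc (PSym.s a :: T)) →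
      j ≤ LF p) := by
  subst hn
  have hlen : 0 < T.length := List.length_pos_iff.mpr (by rintro rfl; simp at hend)
  have hsa : IsSuffixRanking T Rinv R :=
    ⟨hdom, fun i _ j hj hij => hsorted i j hij hj, hRdom, hRinv, hR⟩
  have hkT : k < T.length := hk ▸ hRdom 0 hlen
  have hRk : Rinv k = 0 := hk ▸ hR 0 hlen
  change IsPPredRank T Rinv (penc (PSym.s a :: T)) (LF p)
  rw [penc_cons_static]
  rcases hp.eq_or_lt with rfl | hpk
  · obtain rfl : a = 0 := by
      rw [hL p hkT, if_pos hRk] at hpc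
      exact (Enc.s.inj hpc).symm
    rw [hLF p hkT, if_pos hRk]
    exact hsa.isPPredRank_cons_end_marker hend huniq
  · have hpT := hpk.trans hkT
    obtain ⟨m, hm⟩ : ∃ m, Rinv p = m + 1 := Nat.exists_eq_succ_of_ne_zero fun h =>
      hpk.ne (by rw [← hRinv p hpT, h, ← hRk, hRinv k hkT])
    have hLs : ∀ q < T.length, ∀ m', Rinv q = m' + 1 →
        (L q = Enc.s a ↔ T[m']? = some (PSym.s a)) := by
      intro q hq m' hm'
      have := hdom q hq
      rw [hL q hq, if_neg (by omega), hm', Nat.add_sub_cancel, fce_drop_eq_static_iff (by omega)]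
    rw [hLF p hpT, if_neg (by omega), hm, Nat.add_sub_cancel]
    exact hsa.isPPredRank_cons_static hkT hRk hpk ((hLs p hpT m hm).mp hpc) hm
      fun q hq m' hm' hq' => hmax q hq.le ((hLs q (hq.trans hkT) m' hm').mpr hq')
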